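/- arXiv:2109.10820 — 2 statements merged into one kernel-verified Lean document; each statement's English description precedes it below -/
import Mathlib

section
/- The space X is compact and locally Hausdorff, i.e., every point of X has an open neighborhood whose subspace topology is Hausdorff. -/
/-- The additive circle `ℝ/3ℤ`. -/
abbrev CircleThree : Type := AddCircle (3 : ℝ)

/-- The relation `r` on `C = ℝ/3ℤ`: `r x y` iff `x = y`, or there is `t ∈ (0,1)`
with (`x = [t]` and `y = [t+1]`) or (`x = [t+1]` and `y = [t]`). -/
def relAabAb (x y : CircleThree) : Prop :=
  x = y ∨ ∃ t : ℝ, 0 < t ∧ t < 1 ∧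
    ((x = (t : CircleThree) ∧ y = ((t + 1 : ℝ) : CircleThree)) ∨
     (x = ((t + 1 : ℝ) : CircleThree) ∧ y = (t : CircleThree)))

/- ### Auxiliary material -/

lemma coe_eq_iff' (p : ℝ) {a b : ℝ} :
    (a : AddCircle p) = (b : AddCircle p) ↔ ∃ n : ℤ, n • p = a - b := by
  rw [← sub_eq_zero, ← AddCircle.coe_sub, AddCircle.coe_eq_zero_iff]

lemma coe3_inj {a b : ℝ} (h : |a - b| < 3) (he : (a : CircleThree) = (b : CircleThree)) :
    a = b := by
  obtain ⟨n, hn⟩ := (coe_eq_iff' 3).mp he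
  rw [zsmul_eq_mul] at hn
  have hn0 : n = 0 := by
    by_contra hne
    have h1 : (1 : ℤ) ≤ |n| := Int.one_le_abs hne
    have h1' : (1 : ℝ) ≤ |(n : ℝ)| := by exact_mod_cast h1
    rw [← hn, abs_mul] at h
    have h3 : |(3 : ℝ)| = 3 := by norm_num
    rw [h3] at h
    nlinarith
  rw [hn0] at hn
  push_cast at hn
  linarith

lemma mid_ne {a b : ℝ} (ha0 : 0 < a) (ha1 : a < 1) (hb0 : 0 < b) (hb1 : b < 1) :
    ((a + 1 : ℝ) : CircleThree) ≠ (b : CircleThree) := by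
  intro h
  obtain ⟨n, hn⟩ := (coe_eq_iff' 3).mp h
  rw [zsmul_eq_mul] at hn
  have h1 : (0 : ℝ) < (n : ℝ) := by nlinarith
  have h2 : (1 : ℤ) ≤ n := by exact_mod_cast h1
  have h3 : (1 : ℝ) ≤ (n : ℝ) := by exact_mod_cast h2
  nlinarith

lemma rel_equiv : Equivalence relAabAb := by
  refine ⟨fun x => Or.inl rfl, ?_, ?_⟩
  · rintro x y (rfl | ⟨t, h0, h1, (⟨rfl, rfl⟩ | ⟨rfl, rfl⟩)⟩)
    · exact Or.inl rfl
    · exact Or.inr ⟨t, h0, h1, Or.inr ⟨rfl, rfl⟩⟩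
    · exact Or.inr ⟨t, h0, h1, Or.inl ⟨rfl, rfl⟩⟩
  · rintro x y z (rfl | ⟨t, h0, h1, (⟨rfl, rfl⟩ | ⟨rfl, rfl⟩)⟩) hyz
    · exact hyz
    · rcases hyz with rfl | ⟨t', h0', h1', (⟨he, rfl⟩ | ⟨he, rfl⟩)⟩
      · exact Or.inr ⟨t, h0, h1, Or.inl ⟨rfl, rfl⟩⟩
      · exact absurd he (mid_ne h0 h1 h0' h1')
      · have htt : t = t' := by
          have := coe3_inj (a := t + 1) (b := t' + 1)
            (by rw [abs_lt]; constructor <;> linarith) he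
          linarith
        subst htt
        exact Or.inl rfl
    · rcases hyz with rfl | ⟨t', h0', h1', (⟨he, rfl⟩ | ⟨he, rfl⟩)⟩
      · exact Or.inr ⟨t, h0, h1, Or.inr ⟨rfl, rfl⟩⟩
      · have htt : t = t' :=
          coe3_inj (by rw [abs_lt]; constructor <;> linarith) he
        subst htt
        exact Or.inl rfl
      · exact absurd he.symm (mid_ne h0' h1' h0 h1)

lemma quot_eq {x y : CircleThree} :
    Quot.mk relAabAb x = Quot.mk relAabAb y ↔ relAabAb x y := by
  rw [Quot.eq, rel_equiv.eqvGen_eq]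

lemma glue (t : ℝ) (h0 : 0 < t) (h1 : t < 1) :
    Quot.mk relAabAb ((t : ℝ) : CircleThree) = Quot.mk relAabAb ((t + 1 : ℝ) : CircleThree) :=
  Quot.sound (Or.inr ⟨t, h0, h1, Or.inl ⟨rfl, rfl⟩⟩)

lemma glue_eq {u v : ℝ} (t : ℝ) (h0 : 0 < t) (h1 : t < 1) (hu : u = t) (hv : v = t + 1) :
    Quot.mk relAabAb ((u : ℝ) : CircleThree) = Quot.mk relAabAb ((v : ℝ) : CircleThree) := by
  rw [hu, hv]; exact glue t h0 h1

lemma coe_shift (u : ℝ) : ((u : ℝ) : CircleThree) = ((u - 3 : ℝ) : CircleThree) :=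
  (coe_eq_iff' 3).mpr ⟨1, by rw [zsmul_eq_mul]; push_cast; ring⟩

/- ### The separating map -/

lemma per3 : Function.Periodic (fun s : ℝ => (s : AddCircle (1 : ℝ))) 3 := by
  intro s
  simp only
  rw [show s + 3 = s + 1 + 1 + 1 by ring, AddCircle.coe_add_period, AddCircle.coe_add_period,
    AddCircle.coe_add_period]

noncomputable def e3 : CircleThree → AddCircle (1 : ℝ) := per3.lift

lemma e3_coe (s : ℝ) : e3 (s : CircleThree) = (s : AddCircle (1 : ℝ)) := rfl

lemma cont_e3 : Continuous e3 :=
  (QuotientAddGroup.isQuotientMap_mk _).continuous_iff.mpr (AddCircle.continuous_mk' (1 : ℝ))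

noncomputable def cc : CircleThree → ℝ := fun x => max 0 (1 / 2 - ‖x - ((5 / 2 : ℝ) : CircleThree)‖)

lemma cont_cc : Continuous cc :=
  continuous_const.max (continuous_const.sub ((continuous_id.sub continuous_const).norm))

lemma cc_coe (s : ℝ) : cc (s : CircleThree) = max 0 (1 / 2 - ‖((s - 5 / 2 : ℝ) : CircleThree)‖) := by
  rw [cc, AddCircle.coe_sub]

lemma norm3 {u : ℝ} (h : |u| ≤ 3 / 2) : ‖(u : CircleThree)‖ = |u| := by
  rw [AddCircle.norm_coe_eq_abs_iff (3 : ℝ) (by norm_num)]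
  rw [abs_of_pos (by norm_num : (0 : ℝ) < 3)]
  linarith

lemma cc_pos {s : ℝ} (h2 : 2 < s) (h3 : s < 3) : 0 < cc ((s : ℝ) : CircleThree) := by
  rw [cc_coe]
  rw [norm3 (by rw [abs_le]; constructor <;> linarith)]
  have habs : |s - 5 / 2| < 1 / 2 := abs_lt.mpr ⟨by linarith, by linarith⟩
  exact lt_max_of_lt_right (by linarith)

lemma cc_zero {s : ℝ} (h0 : 0 ≤ s) (h2 : s ≤ 2) : cc ((s : ℝ) : CircleThree) = 0 := by
  rw [cc_coe]
  apply max_eq_left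
  by_cases h1 : 1 ≤ s
  · rw [norm3 (by rw [abs_le]; constructor <;> linarith)]
    rw [abs_of_nonpos (by linarith)]
    linarith
  · have key : ((s - 5 / 2 : ℝ) : CircleThree) = ((s + 1 / 2 : ℝ) : CircleThree) :=
      (coe_eq_iff' 3).mpr ⟨-1, by rw [zsmul_eq_mul]; push_cast; ring⟩
    rw [key, norm3 (by rw [abs_le]; constructor <;> linarith)]
    rw [abs_of_nonneg (by linarith)]
    linarith

noncomputable def kmap : CircleThree → (AddCircle (1 : ℝ)) × ℝ := fun x => (e3 x, cc x)

lemma k_glue (t : ℝ) (h0 : 0 < t) (h1 : t < 1) :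
    kmap ((t : ℝ) : CircleThree) = kmap ((t + 1 : ℝ) : CircleThree) := by
  have he : e3 ((t : ℝ) : CircleThree) = e3 ((t + 1 : ℝ) : CircleThree) := by
    rw [e3_coe, e3_coe, AddCircle.coe_add_period]
  have hc : cc ((t : ℝ) : CircleThree) = cc ((t + 1 : ℝ) : CircleThree) := by
    rw [cc_zero (le_of_lt h0) (by linarith), cc_zero (by linarith) (by linarith)]
  simp only [kmap]
  rw [he, hc]

lemma k_invariant : ∀ x y, relAabAb x y → kmap x = kmap y := by
  rintro x y (rfl | ⟨t, h0, h1, (⟨rfl, rfl⟩ | ⟨rfl, rfl⟩)⟩)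
  · rfl
  · exact k_glue t h0 h1
  · exact (k_glue t h0 h1).symm

noncomputable def Kmap : Quot relAabAb → (AddCircle (1 : ℝ)) × ℝ := Quot.lift kmap k_invariant

lemma cont_K : Continuous Kmap := continuous_quot_lift _ (cont_e3.prodMk cont_cc)

/- ### The main local lemma -/

lemma good (U : Set ℝ) (hUopen : IsOpen U)
    (hsat : ∀ t : ℝ, 0 < t → t < 1 →
      (((t : ℝ) : CircleThree) ∈ ((↑) : ℝ → CircleThree) '' U ↔
        (((t + 1 : ℝ)) : CircleThree) ∈ ((↑) : ℝ → CircleThree) '' U))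
    (hinj : ∀ s ∈ U, ∀ s' ∈ U, kmap ((s : ℝ) : CircleThree) = kmap ((s' : ℝ) : CircleThree) →
      Quot.mk relAabAb ((s : ℝ) : CircleThree) = Quot.mk relAabAb ((s' : ℝ) : CircleThree)) :
    IsOpen (Quot.mk relAabAb '' (((↑) : ℝ → CircleThree) '' U)) ∧
      T2Space ↥(Quot.mk relAabAb '' (((↑) : ℝ → CircleThree) '' U)) := by
  have hpre : Quot.mk relAabAb ⁻¹' (Quot.mk relAabAb '' (((↑) : ℝ → CircleThree) '' U))
      = ((↑) : ℝ → CircleThree) '' U := by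
    apply Set.Subset.antisymm
    · rintro x ⟨y, ⟨s, hsU, rfl⟩, hxy⟩
      have hrel : relAabAb ((s : ℝ) : CircleThree) x := quot_eq.mp hxy
      rcases hrel with heq | ⟨t, h0, h1, (⟨he1, he2⟩ | ⟨he1, he2⟩)⟩
      · exact heq ▸ ⟨s, hsU, rfl⟩
      · rw [he2]
        exact (hsat t h0 h1).mp ⟨s, hsU, he1⟩
      · rw [he2]
        exact (hsat t h0 h1).mpr ⟨s, hsU, he1⟩
    · exact fun x hx => Set.mem_image_of_mem _ hx
  constructor
  · rw [← isQuotientMap_quot_mk.isOpen_preimage, hpre]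
    exact QuotientAddGroup.isOpenMap_coe U hUopen
  · refine T2Space.of_injective_continuous
      (f := fun z : ↥(Quot.mk relAabAb '' (((↑) : ℝ → CircleThree) '' U)) => Kmap z.1) ?_ ?_
    · rintro ⟨z, hz⟩ ⟨z', hz'⟩ h
      obtain ⟨y, ⟨s, hsU, rfl⟩, rfl⟩ := hz
      obtain ⟨y', ⟨s', hs'U, rfl⟩, rfl⟩ := hz'
      exact Subtype.ext (hinj s hsU s' hs'U h)
    · exact cont_K.comp continuous_subtype_val

/- ### Injectivity on the three charts -/

lemma hinj1 : ∀ s ∈ Set.Ioo (0 : ℝ) 2, ∀ s' ∈ Set.Ioo (0 : ℝ) 2,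
    kmap ((s : ℝ) : CircleThree) = kmap ((s' : ℝ) : CircleThree) →
    Quot.mk relAabAb ((s : ℝ) : CircleThree) = Quot.mk relAabAb ((s' : ℝ) : CircleThree) := by
  rintro s ⟨hs0, hs2⟩ s' ⟨hs'0, hs'2⟩ h
  have he : e3 ((s : ℝ) : CircleThree) = e3 ((s' : ℝ) : CircleThree) := congrArg Prod.fst h
  rw [e3_coe, e3_coe, coe_eq_iff'] at he
  obtain ⟨n, hn⟩ := he
  rw [zsmul_eq_mul, mul_one] at hn
  have hl : (-2 : ℤ) < n := by exact_mod_cast (show (-2 : ℝ) < (n : ℝ) by linarith)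
  have hr : n < 2 := by exact_mod_cast (show (n : ℝ) < 2 by linarith)
  interval_cases n <;> push_cast at hn
  · exact glue_eq s hs0 (by linarith) rfl (by linarith)
  · rw [show (s' : ℝ) = s by linarith]
  · exact (glue_eq s' hs'0 (by linarith) rfl (by linarith)).symm

lemma hinj2 : ∀ s ∈ Set.Ioo (0 : ℝ) 1 ∪ Set.Ioo (1 : ℝ) 3,
    ∀ s' ∈ Set.Ioo (0 : ℝ) 1 ∪ Set.Ioo (1 : ℝ) 3,
    kmap ((s : ℝ) : CircleThree) = kmap ((s' : ℝ) : CircleThree) →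
    Quot.mk relAabAb ((s : ℝ) : CircleThree) = Quot.mk relAabAb ((s' : ℝ) : CircleThree) := by
  rintro s hs s' hs' h
  have hsb : 0 < s ∧ s < 3 := by rcases hs with ⟨a, b⟩ | ⟨a, b⟩ <;> exact ⟨by linarith, by linarith⟩
  have hs'b : 0 < s' ∧ s' < 3 := by
    rcases hs' with ⟨a, b⟩ | ⟨a, b⟩ <;> exact ⟨by linarith, by linarith⟩
  obtain ⟨hs0, hs3⟩ := hsb
  obtain ⟨hs'0, hs'3⟩ := hs'b
  have he : e3 ((s : ℝ) : CircleThree) = e3 ((s' : ℝ) : CircleThree) := congrArg Prod.fst h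
  have hc : cc ((s : ℝ) : CircleThree) = cc ((s' : ℝ) : CircleThree) := congrArg Prod.snd h
  rw [e3_coe, e3_coe, coe_eq_iff'] at he
  obtain ⟨n, hn⟩ := he
  rw [zsmul_eq_mul, mul_one] at hn
  have hl : (-3 : ℤ) < n := by exact_mod_cast (show (-3 : ℝ) < (n : ℝ) by linarith)
  have hr : n < 3 := by exact_mod_cast (show (n : ℝ) < 3 by linarith)
  interval_cases n <;> push_cast at hn
  · -- s' = s + 2 : contradiction via cc
    exfalso
    have h1 : cc ((s : ℝ) : CircleThree) = 0 := cc_zero (by linarith) (by linarith)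
    have h2 : 0 < cc ((s' : ℝ) : CircleThree) := cc_pos (by linarith) (by linarith)
    linarith
  · -- s' = s + 1
    rcases hs with ⟨a, b⟩ | ⟨a, b⟩
    · exact glue_eq s a b rfl (by linarith)
    · exfalso
      have h1 : cc ((s : ℝ) : CircleThree) = 0 := cc_zero (by linarith) (by linarith)
      have h2 : 0 < cc ((s' : ℝ) : CircleThree) := cc_pos (by linarith) (by linarith)
      linarith
  · rw [show (s' : ℝ) = s by linarith]
  · -- s = s' + 1
    rcases hs' with ⟨a, b⟩ | ⟨a, b⟩
    · exact (glue_eq s' a b rfl (by linarith)).symm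
    · exfalso
      have h1 : cc ((s' : ℝ) : CircleThree) = 0 := cc_zero (by linarith) (by linarith)
      have h2 : 0 < cc ((s : ℝ) : CircleThree) := cc_pos (by linarith) (by linarith)
      linarith
  · -- s = s' + 2 : contradiction via cc
    exfalso
    have h1 : cc ((s' : ℝ) : CircleThree) = 0 := cc_zero (by linarith) (by linarith)
    have h2 : 0 < cc ((s : ℝ) : CircleThree) := cc_pos (by linarith) (by linarith)
    linarith

lemma hinj3 : ∀ s ∈ Set.Ioo (1 : ℝ) 2 ∪ Set.Ioo (2 : ℝ) 4,
    ∀ s' ∈ Set.Ioo (1 : ℝ) 2 ∪ Set.Ioo (2 : ℝ) 4,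
    kmap ((s : ℝ) : CircleThree) = kmap ((s' : ℝ) : CircleThree) →
    Quot.mk relAabAb ((s : ℝ) : CircleThree) = Quot.mk relAabAb ((s' : ℝ) : CircleThree) := by
  rintro s hs s' hs' h
  have hsb : 1 < s ∧ s < 4 := by rcases hs with ⟨a, b⟩ | ⟨a, b⟩ <;> exact ⟨by linarith, by linarith⟩
  have hs'b : 1 < s' ∧ s' < 4 := by
    rcases hs' with ⟨a, b⟩ | ⟨a, b⟩ <;> exact ⟨by linarith, by linarith⟩
  obtain ⟨hs1, hs4⟩ := hsb
  obtain ⟨hs'1, hs'4⟩ := hs'b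
  have he : e3 ((s : ℝ) : CircleThree) = e3 ((s' : ℝ) : CircleThree) := congrArg Prod.fst h
  have hc : cc ((s : ℝ) : CircleThree) = cc ((s' : ℝ) : CircleThree) := congrArg Prod.snd h
  rw [e3_coe, e3_coe, coe_eq_iff'] at he
  obtain ⟨n, hn⟩ := he
  rw [zsmul_eq_mul, mul_one] at hn
  have hl : (-3 : ℤ) < n := by exact_mod_cast (show (-3 : ℝ) < (n : ℝ) by linarith)
  have hr : n < 3 := by exact_mod_cast (show (n : ℝ) < 3 by linarith)
  interval_cases n <;> push_cast at hn
  · -- s' = s + 2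
    rcases hs with ⟨a, b⟩ | ⟨a, b⟩
    · -- s ∈ (1,2), s' ∈ (3,4) : glued pair
      rw [coe_shift s']
      exact (glue_eq (s - 1) (by linarith) (by linarith) (by linarith) (by ring)).symm
    · exfalso; linarith
  · -- s' = s + 1
    rcases hs with ⟨a, b⟩ | ⟨a, b⟩
    · -- s ∈ (1,2), s' ∈ (2,3)
      exfalso
      have h1 : cc ((s : ℝ) : CircleThree) = 0 := cc_zero (by linarith) (by linarith)
      have h2 : 0 < cc ((s' : ℝ) : CircleThree) := cc_pos (by linarith) (by linarith)
      linarith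
    · -- s ∈ (2,3), s' ∈ (3,4)
      have hs'lt : s' < 4 := hs'4
      have hsa : s < 3 := by linarith
      exfalso
      have h2 : 0 < cc ((s : ℝ) : CircleThree) := cc_pos (by linarith) (by linarith)
      have key : cc ((s' : ℝ) : CircleThree) = cc ((s' - 3 : ℝ) : CircleThree) :=
        congrArg cc (coe_shift s')
      have h1 : cc ((s' - 3 : ℝ) : CircleThree) = 0 := cc_zero (by linarith) (by linarith)
      linarith
  · rw [show (s' : ℝ) = s by linarith]
  · -- s = s' + 1
    rcases hs' with ⟨a, b⟩ | ⟨a, b⟩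
    · exfalso
      have h1 : cc ((s' : ℝ) : CircleThree) = 0 := cc_zero (by linarith) (by linarith)
      have h2 : 0 < cc ((s : ℝ) : CircleThree) := cc_pos (by linarith) (by linarith)
      linarith
    · have hsa : s' < 3 := by linarith
      exfalso
      have h2 : 0 < cc ((s' : ℝ) : CircleThree) := cc_pos (by linarith) (by linarith)
      have key : cc ((s : ℝ) : CircleThree) = cc ((s - 3 : ℝ) : CircleThree) :=
        congrArg cc (coe_shift s)
      have h1 : cc ((s - 3 : ℝ) : CircleThree) = 0 := cc_zero (by linarith) (by linarith)
      linarith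
  · -- s = s' + 2
    rcases hs' with ⟨a, b⟩ | ⟨a, b⟩
    · rw [coe_shift s]
      exact glue_eq (s' - 1) (by linarith) (by linarith) (by linarith) (by ring)
    · exfalso; linarith

/- ### Saturation of the three charts -/

lemma hsat1 : ∀ t : ℝ, 0 < t → t < 1 →
    (((t : ℝ) : CircleThree) ∈ ((↑) : ℝ → CircleThree) '' Set.Ioo (0 : ℝ) 2 ↔
      (((t + 1 : ℝ)) : CircleThree) ∈ ((↑) : ℝ → CircleThree) '' Set.Ioo (0 : ℝ) 2) := by
  intro t h0 h1
  constructor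
  · intro _; exact ⟨t + 1, ⟨by linarith, by linarith⟩, rfl⟩
  · intro _; exact ⟨t, ⟨h0, by linarith⟩, rfl⟩

lemma hsat2 : ∀ t : ℝ, 0 < t → t < 1 →
    (((t : ℝ) : CircleThree) ∈ ((↑) : ℝ → CircleThree) '' (Set.Ioo (0 : ℝ) 1 ∪ Set.Ioo (1 : ℝ) 3) ↔
      (((t + 1 : ℝ)) : CircleThree) ∈
        ((↑) : ℝ → CircleThree) '' (Set.Ioo (0 : ℝ) 1 ∪ Set.Ioo (1 : ℝ) 3)) := by
  intro t h0 h1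
  constructor
  · intro _; exact ⟨t + 1, Or.inr ⟨by linarith, by linarith⟩, rfl⟩
  · intro _; exact ⟨t, Or.inl ⟨h0, h1⟩, rfl⟩

lemma hsat3 : ∀ t : ℝ, 0 < t → t < 1 →
    (((t : ℝ) : CircleThree) ∈ ((↑) : ℝ → CircleThree) '' (Set.Ioo (1 : ℝ) 2 ∪ Set.Ioo (2 : ℝ) 4) ↔
      (((t + 1 : ℝ)) : CircleThree) ∈
        ((↑) : ℝ → CircleThree) '' (Set.Ioo (1 : ℝ) 2 ∪ Set.Ioo (2 : ℝ) 4)) := by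
  intro t h0 h1
  constructor
  · intro _; exact ⟨t + 1, Or.inl ⟨by linarith, by linarith⟩, rfl⟩
  · intro _
    refine ⟨t + 3, Or.inr ⟨by linarith, by linarith⟩, ?_⟩
    exact AddCircle.coe_add_period 3 t

/- ### The theorem -/

/-- the quotient space `X = C/r` (with the quotient topology) is compact
and locally Hausdorff: every point has an open neighborhood which is Hausdorff in the
subspace topology. -/
theorem stmt_2 :
    CompactSpace (Quot relAabAb) ∧
    (∀ x : Quot relAabAb, ∃ O : Set (Quot relAabAb), IsOpen O ∧ x ∈ O ∧ T2Space ↥O) := by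
  haveI : Fact ((0 : ℝ) < 3) := ⟨by norm_num⟩
  constructor
  · exact Quot.compactSpace
  · intro x
    obtain ⟨y, rfl⟩ := Quot.exists_rep x
    obtain ⟨a, rfl⟩ := QuotientAddGroup.mk_surjective y
    set b : ℝ := 3 * Int.fract (a / 3) with hbdef
    have hb0 : 0 ≤ b := mul_nonneg (by norm_num) (Int.fract_nonneg _)
    have hb3 : b < 3 := by
      have := Int.fract_lt_one (a / 3)
      rw [hbdef]; linarith
    have key : ((a : ℝ) : CircleThree) = ((b : ℝ) : CircleThree) := by
      rw [coe_eq_iff']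
      refine ⟨⌊a / 3⌋, ?_⟩
      rw [zsmul_eq_mul, hbdef, Int.fract]
      ring
    rcases eq_or_ne b 0 with h0 | h0
    · obtain ⟨hopen, ht2⟩ := good (Set.Ioo (1 : ℝ) 2 ∪ Set.Ioo (2 : ℝ) 4)
        ((isOpen_Ioo).union isOpen_Ioo) hsat3 hinj3
      refine ⟨_, hopen, ?_, ht2⟩
      have h30 : ((3 : ℝ) : CircleThree) = ((0 : ℝ) : CircleThree) := by
        have := AddCircle.coe_add_period 3 (0 : ℝ)
        rwa [zero_add] at this
      have ha3 : ((a : ℝ) : CircleThree) = ((3 : ℝ) : CircleThree) := by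
        rw [key, h0, h30]
      exact ⟨((3 : ℝ) : CircleThree), ⟨3, Or.inr ⟨by norm_num, by norm_num⟩, rfl⟩,
        congrArg _ ha3.symm⟩
    rcases eq_or_ne b 1 with h1 | h1
    · obtain ⟨hopen, ht2⟩ := good (Set.Ioo (0 : ℝ) 2) isOpen_Ioo hsat1 hinj1
      refine ⟨_, hopen, ?_, ht2⟩
      exact ⟨((b : ℝ) : CircleThree), ⟨b, ⟨by rw [h1]; norm_num, by rw [h1]; norm_num⟩, rfl⟩,
        congrArg _ key.symm⟩
    · obtain ⟨hopen, ht2⟩ := good (Set.Ioo (0 : ℝ) 1 ∪ Set.Ioo (1 : ℝ) 3)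
        ((isOpen_Ioo).union isOpen_Ioo) hsat2 hinj2
      refine ⟨_, hopen, ?_, ht2⟩
      have hbmem : b ∈ Set.Ioo (0 : ℝ) 1 ∪ Set.Ioo (1 : ℝ) 3 := by
        rcases lt_trichotomy b 1 with hlt | heq | hgt
        · exact Or.inl ⟨lt_of_le_of_ne hb0 (Ne.symm h0), hlt⟩
        · exact absurd heq h1
        · exact Or.inr ⟨hgt, hb3⟩
      exact ⟨((b : ℝ) : CircleThree), ⟨b, hbmem, rfl⟩, congrArg _ key.symm⟩
end

section
/- The restriction of q to U = {(c,z) ∈ S² : c ≠ 0} (the sphere with the two poles removed), viewed as a map U → X, is a local homeomorphism. -/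
noncomputable section

/-- The 2-sphere, realized as the unit sphere `{(c,z) : |c|² + z² = 1}` in `ℂ × ℝ`,
with the subspace topology. -/
def TwoSphere : Set (ℂ × ℝ) := {p | ‖p.1‖ ^ 2 + p.2 ^ 2 = 1}

/-- The relation `r₀` on `S²`: `r₀ (c,z) (c',z')` iff `z ≠ 0`, `c' = -c` and `z' = z`. -/
def sphRel (a b : TwoSphere) : Prop :=
  a.1.2 ≠ 0 ∧ b.1.1 = -a.1.1 ∧ b.1.2 = a.1.2

/-- The twisted sphere `X`: the quotient of `S²` by the equivalence relation generated
by `r₀`, with the quotient topology. -/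
abbrev TwistedSphere : Type := Quot (Relation.EqvGen sphRel)

/-- The quotient map `q : S² → X`. -/
abbrev sphQ : TwoSphere → TwistedSphere := Quot.mk (Relation.EqvGen sphRel)

/-- `U = S² ∖ {poles}`: the points of the sphere whose `ℂ`-coordinate is nonzero. -/
def sphU : Set TwoSphere := {p | p.1.1 ≠ 0}

/-!
`≈` identifies a point only with its flip `(c, z) ↦ (-c, z)`, and only when `z ≠ 0`. Hence the
saturation of an open set `V` is `V ∪ (flip⁻¹ V ∩ {z ≠ 0})`, which is open, so `q` is an open map.
Near a point `(c₀, z₀)` with `c₀ ≠ 0`, the open half-sphere `Re (c · c̄₀) > 0` is disjoint from its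
flip, so `q` is injective on it. A continuous, open, locally injective map is a local
homeomorphism.
-/

open Topology ComplexConjugate

theorem IsLocallyInjective.isLocalHomeomorph {X Y : Type*} [TopologicalSpace X]
    [TopologicalSpace Y] {f : X → Y} (hf : IsLocallyInjective f) (hc : Continuous f)
    (ho : IsOpenMap f) : IsLocalHomeomorph f := by
  refine isLocalHomeomorph_iff_isOpenEmbedding_restrict.mpr fun x ↦ ?_
  obtain ⟨U, hU, hxU, hinj⟩ := hf x
  refine ⟨U, hU.mem_nhds hxU, ?_⟩
  exact isOpenEmbedding_iff_continuous_injective_isOpenMap.mpr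
    ⟨hc.comp continuous_subtype_val, hinj.injective, ho.comp hU.isOpenMap_subtype_val⟩

def sphFlip (p : TwoSphere) : TwoSphere :=
  ⟨(-p.1.1, p.1.2), by simpa [TwoSphere] using p.2⟩

@[simp] lemma sphFlip_fst (p : TwoSphere) : (sphFlip p).1.1 = -p.1.1 := rfl

@[simp] lemma sphFlip_snd (p : TwoSphere) : (sphFlip p).1.2 = p.1.2 := rfl

lemma sphFlip_involutive : Function.Involutive sphFlip := fun p ↦ by
  ext <;> simp

lemma continuous_sphFlip : Continuous sphFlip :=
  ((continuous_fst.comp continuous_subtype_val).neg.prodMk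
    (continuous_snd.comp continuous_subtype_val)).subtype_mk _

lemma sphRel_iff {a b : TwoSphere} : sphRel a b ↔ a.1.2 ≠ 0 ∧ b = sphFlip a := by
  simp only [sphRel, Subtype.ext_iff, Prod.ext_iff, sphFlip_fst, sphFlip_snd]

lemma sphRel_symm {a b : TwoSphere} (h : sphRel a b) : sphRel b a := by
  obtain ⟨hz, rfl⟩ := sphRel_iff.mp h
  exact sphRel_iff.mpr ⟨hz, (sphFlip_involutive a).symm⟩

lemma eq_of_sphRel_of_sphRel {a b c : TwoSphere} (hab : sphRel a b) (hbc : sphRel b c) :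
    c = a := by
  obtain ⟨-, rfl⟩ := sphRel_iff.mp hab
  obtain ⟨-, rfl⟩ := sphRel_iff.mp hbc
  exact sphFlip_involutive a

lemma equivalence_eq_or_sphRel : Equivalence fun a b : TwoSphere ↦ a = b ∨ sphRel a b where
  refl _ := .inl rfl
  symm := by
    rintro a b (rfl | h)
    exacts [.inl rfl, .inr (sphRel_symm h)]
  trans := by
    rintro a b c (rfl | hab) (rfl | hbc)
    exacts [.inl rfl, .inr hbc, .inr hab, .inl (eq_of_sphRel_of_sphRel hab hbc).symm]

lemma sphQ_eq_sphQ_iff {a b : TwoSphere} : sphQ a = sphQ b ↔ a = b ∨ sphRel a b := by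
  rw [Quot.eq, (Relation.EqvGen.is_equivalence _).eqvGen_iff]
  refine ⟨fun h ↦ equivalence_eq_or_sphRel.eqvGen_iff.mp (h.mono fun _ _ ↦ .inr), ?_⟩
  rintro (rfl | h)
  exacts [.refl a, .rel _ _ h]

lemma preimage_sphQ_image (V : Set TwoSphere) :
    sphQ ⁻¹' (sphQ '' V) = V ∪ (sphFlip ⁻¹' V ∩ {p | p.1.2 ≠ 0}) := by
  ext p
  simp only [Set.mem_preimage, Set.mem_image, sphQ_eq_sphQ_iff, sphRel_iff]
  constructor
  · rintro ⟨v, hv, rfl | ⟨hz, rfl⟩⟩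
    · exact .inl hv
    · exact .inr ⟨by rwa [Set.mem_preimage, sphFlip_involutive], hz⟩
  · rintro (hp | ⟨hp, hz⟩)
    · exact ⟨p, hp, .inl rfl⟩
    · exact ⟨sphFlip p, hp, .inr ⟨hz, (sphFlip_involutive p).symm⟩⟩

lemma isOpenMap_sphQ : IsOpenMap sphQ := by
  intro V hV
  rw [isOpen_coinduced, preimage_sphQ_image]
  exact hV.union ((hV.preimage continuous_sphFlip).inter
    (isOpen_ne.preimage (continuous_snd.comp continuous_subtype_val)))

lemma injOn_sphQ_re_mul_conj_pos (c₀ : ℂ) :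
    {p : TwoSphere | 0 < (p.1.1 * conj c₀).re}.InjOn sphQ := by
  intro a ha b hb hab
  refine (sphQ_eq_sphQ_iff.mp hab).resolve_right fun h ↦ ?_
  obtain ⟨-, rfl⟩ := sphRel_iff.mp h
  simp only [Set.mem_ofPred_eq, sphFlip_fst, neg_mul, Complex.neg_re] at ha hb
  linarith

lemma isOpen_sphU : IsOpen sphU :=
  isOpen_ne.preimage (continuous_fst.comp continuous_subtype_val)

/-- the restriction of `q` to `U` (the sphere with the two poles removed),
viewed as a map `U → X`, is a local homeomorphism. -/
theorem stmt_9 :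
    IsLocalHomeomorph (fun u : sphU => sphQ u.1) := by
  have hcont : Continuous (fun u : sphU => sphQ u.1) :=
    continuous_quot_mk.comp continuous_subtype_val
  refine IsLocallyInjective.isLocalHomeomorph (fun u ↦ ?_) hcont
    (isOpenMap_sphQ.comp isOpen_sphU.isOpenMap_subtype_val)
  refine ⟨{p | 0 < (p.1.1.1 * conj u.1.1.1).re}, ?_, ?_, ?_⟩
  · exact isOpen_lt continuous_const (by fun_prop)
  · have hu : u.1.1.1 ≠ 0 := u.2
    show 0 < (u.1.1.1 * conj u.1.1.1).re
    rw [Complex.mul_conj]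
    exact_mod_cast Complex.normSq_pos.mpr hu
  · exact fun a ha b hb hab ↦ Subtype.val_injective
      (injOn_sphQ_re_mul_conj_pos u.1.1.1 ha hb hab)

end
end
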